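/- For the ZF outage capacity C_n(k_n) = R·k_n·∑_{r=1}^{M-k_n+1} ((βk_n/k)^r/(1+βk_n/k)^{r+(N-1)k-1})·(r+(N-1)k-1)!/(r!((N-1)k-1)!), there exists N* such that for all N ≥ N*, C_n is maximized over k_n ∈ {1,…,M} at k_n = 1. -/

import Mathlib

/-!
Write `x = β k_n / k` and `m = (N - 1) k - 1`; the sum in `C_n(k_n)` is `outageSum x (M - k_n + 1) m`.
Since `x^r ≤ (1 + x)^r`, each of its terms is at most `(m + M)^M / (1 + x)^m`, and for `k_n ≥ 2`
we have `x ≥ 2β/k`, so `C_n(k_n) ≤ R M² (m + M)^M / (1 + 2β/k)^m`. The term `r = 1` alone gives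
`C_n(1) ≥ R (β/k) / (1 + β/k)^(m+1)`, which decays at the slower geometric rate, hence wins
once `m`, i.e. `N`, is large.
-/

open Finset Filter Topology

noncomputable def outageSum (x : ℝ) (L m : ℕ) : ℝ :=
  ∑ r ∈ Icc 1 L, ((r + m).choose r : ℝ) * x ^ r / (1 + x) ^ (r + m)

lemma sum_factorial_eq_outageSum (x : ℝ) (L : ℕ) {n : ℕ} (hn : 1 ≤ n) :
    ∑ r ∈ Icc 1 L, x ^ r / (1 + x) ^ (r + n - 1) *
      (((r + n - 1).factorial : ℝ) / ((r.factorial : ℝ) * ((n - 1).factorial : ℝ))) =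
    outageSum x L (n - 1) := by
  refine sum_congr rfl fun r _ => ?_
  rw [Nat.add_sub_assoc hn, ← Nat.cast_add_choose]
  ring

lemma outageSum_mono {x : ℝ} (hx : 0 ≤ x) (m : ℕ) : Monotone (outageSum x · m) :=
  fun _ _ hLL' => sum_le_sum_of_subset_of_nonneg (Icc_subset_Icc_right hLL')
    fun _ _ _ => by positivity

lemma outageSum_le {x : ℝ} (hx : 0 ≤ x) (L m : ℕ) :
    outageSum x L m ≤ L * (((m : ℝ) + L) ^ L / (1 + x) ^ m) := by
  have hterm : ∀ r ∈ Icc 1 L,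
      ((r + m).choose r : ℝ) * x ^ r / (1 + x) ^ (r + m) ≤ ((m : ℝ) + L) ^ L / (1 + x) ^ m := by
    intro r hr
    obtain ⟨hr1, hrL⟩ := mem_Icc.mp hr
    have hratio : x ^ r / (1 + x) ^ r ≤ 1 :=
      div_le_one_of_le₀ (pow_le_pow_left₀ hx (by linarith) r) (by positivity)
    have hchoose : ((r + m).choose r : ℝ) ≤ ((m : ℝ) + L) ^ L :=
      calc ((r + m).choose r : ℝ) ≤ ((r + m : ℕ) : ℝ) ^ r := by
            exact_mod_cast Nat.choose_le_pow (r + m) r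
        _ ≤ ((m : ℝ) + L) ^ r := by
            gcongr; push_cast; linarith [(Nat.cast_le (α := ℝ)).mpr hrL]
        _ ≤ ((m : ℝ) + L) ^ L := by
            have : (1 : ℝ) ≤ L := by exact_mod_cast hr1.trans hrL
            gcongr
            linarith [(Nat.cast_nonneg m : (0 : ℝ) ≤ m)]
    calc ((r + m).choose r : ℝ) * x ^ r / (1 + x) ^ (r + m)
        = (r + m).choose r * (x ^ r / (1 + x) ^ r) / (1 + x) ^ m := by rw [pow_add]; ring
      _ ≤ ((m : ℝ) + L) ^ L * 1 / (1 + x) ^ m := by gcongr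
      _ = ((m : ℝ) + L) ^ L / (1 + x) ^ m := by rw [mul_one]
  simpa [outageSum] using sum_le_card_nsmul _ _ _ hterm

lemma div_pow_succ_le_outageSum {x : ℝ} (hx : 0 ≤ x) {L : ℕ} (hL : 1 ≤ L) (m : ℕ) :
    x / (1 + x) ^ (m + 1) ≤ outageSum x L m := by
  have hfirst : x / (1 + x) ^ (m + 1) ≤ ((1 + m).choose 1 : ℝ) * x ^ 1 / (1 + x) ^ (1 + m) := by
    rw [Nat.choose_one_right, pow_one, add_comm 1 m]
    push_cast
    rw [mul_div_assoc]
    exact le_mul_of_one_le_left (by positivity) (by linarith [(Nat.cast_nonneg m : (0 : ℝ) ≤ m)])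
  exact hfirst.trans <|
    single_le_sum (f := fun r => ((r + m).choose r : ℝ) * x ^ r / (1 + x) ^ (r + m))
      (fun _ _ => by positivity) (mem_Icc.mpr ⟨le_rfl, hL⟩)

lemma tendsto_add_pow_mul_pow_atTop_nhds_zero (c d : ℕ) {q : ℝ} (hq0 : 0 < q) (hq1 : q < 1) :
    Tendsto (fun m : ℕ => ((m : ℝ) + c) ^ d * q ^ m) atTop (𝓝 0) := by
  have hshift := ((tendsto_pow_const_mul_const_pow_of_lt_one d hq0.le hq1).comp
    (tendsto_add_atTop_nat c)).div_const (q ^ c)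
  rw [zero_div] at hshift
  refine hshift.congr fun m => ?_
  simp only [Function.comp_apply, Nat.cast_add, pow_add]
  field_simp

lemma eventually_mul_add_pow_div_pow_le {u v : ℝ} (hu : 0 < u) (huv : u < v) (b : ℝ) {c : ℝ}
    (hc : 0 < c) (d : ℕ) :
    ∀ᶠ m : ℕ in atTop, b * ((m : ℝ) + d) ^ d / v ^ m ≤ c / u ^ m := by
  have hv : 0 < v := hu.trans huv
  have hlim := (tendsto_add_pow_mul_pow_atTop_nhds_zero d d (div_pos hu hv)
    ((div_lt_one hv).mpr huv)).const_mul b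
  rw [mul_zero] at hlim
  filter_upwards [hlim.eventually_lt_const hc] with m hm
  have hum : 0 < u ^ m := pow_pos hu m
  calc b * ((m : ℝ) + d) ^ d / v ^ m = b * (((m : ℝ) + d) ^ d * (u / v) ^ m) / u ^ m := by
        rw [div_pow]; field_simp
    _ ≤ c / u ^ m := by gcongr

theorem stmt_9_general (M k : ℕ) (hk : 1 ≤ k) (β R : ℝ) (hβ : 0 < β) (hR : 0 < R)
    (C : ℕ → ℕ → ℝ)
    (hC : ∀ N kn, C N kn = R * kn * ∑ r ∈ Finset.Icc 1 (M - kn + 1),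
      (β * kn / k) ^ r / (1 + β * kn / k) ^ (r + (N - 1) * k - 1) *
        ((r + (N - 1) * k - 1).factorial / (r.factorial * ((N - 1) * k - 1).factorial))) :
    ∃ Nstar : ℕ, ∀ N : ℕ, Nstar ≤ N → ∀ kn ∈ Finset.Icc 1 M, C N kn ≤ C N 1 := by
  set a := β / k
  have ha : 0 < a := div_pos hβ (by exact_mod_cast hk)
  obtain ⟨m₀, hm₀⟩ := eventually_atTop.mp <| eventually_mul_add_pow_div_pow_le
    (u := 1 + a) (v := 1 + 2 * a) (by positivity) (by linarith) ((M : ℝ) ^ 2)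
    (c := a / (1 + a)) (by positivity) M
  refine ⟨m₀ + 2, fun N hN kn hkn => ?_⟩
  obtain ⟨hkn1, hknM⟩ := mem_Icc.mp hkn
  obtain rfl | hkn2 := hkn1.eq_or_lt
  · exact le_rfl
  have hNk : 1 ≤ (N - 1) * k := Nat.mul_pos (by omega) hk
  set m := (N - 1) * k - 1
  have hm : m₀ ≤ m := by have := Nat.le_mul_of_pos_right (N - 1) hk; omega
  have hx : β * kn / k = a * kn := by ring
  have hknR : (2 : ℝ) ≤ kn := by exact_mod_cast hkn2
  have hknMR : (kn : ℝ) ≤ M := by exact_mod_cast hknM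
  rw [hC, hC, sum_factorial_eq_outageSum _ _ hNk, sum_factorial_eq_outageSum _ _ hNk, hx,
    Nat.cast_one, mul_one, mul_one]
  calc R * kn * outageSum (a * kn) (M - kn + 1) m
      ≤ R * kn * (M * (((m : ℝ) + M) ^ M / (1 + 2 * a) ^ m)) := by
        gcongr
        refine (outageSum_mono (by positivity) m (by omega : M - kn + 1 ≤ M)).trans
          ((outageSum_le (by positivity) M m).trans ?_)
        gcongr _ * (_ / (1 + ?_) ^ _)
        nlinarith
    _ ≤ R * M * (M * (((m : ℝ) + M) ^ M / (1 + 2 * a) ^ m)) := by gcongr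
    _ = R * ((M : ℝ) ^ 2 * ((m : ℝ) + M) ^ M / (1 + 2 * a) ^ m) := by ring
    _ ≤ R * (a / (1 + a) ^ (m + 1)) := by
        rw [pow_succ' (1 + a), ← div_div]
        exact mul_le_mul_of_nonneg_left (hm₀ m hm) hR.le
    _ ≤ R * outageSum a (M - 1 + 1) m := by
        gcongr
        exact div_pow_succ_le_outageSum ha.le (by omega) m

theorem stmt_9 (M k : ℕ) (hM : 1 ≤ M) (hk : 1 ≤ k) (β R : ℝ) (hβ : 0 < β) (hR : 0 < R)
    (C : ℕ → ℕ → ℝ)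
    (hC : ∀ N kn, C N kn = R * kn * ∑ r ∈ Finset.Icc 1 (M - kn + 1),
      (β * kn / k) ^ r / (1 + β * kn / k) ^ (r + (N - 1) * k - 1) *
        ((r + (N - 1) * k - 1).factorial / (r.factorial * ((N - 1) * k - 1).factorial))) :
    ∃ Nstar : ℕ, ∀ N : ℕ, Nstar ≤ N → ∀ kn ∈ Finset.Icc 1 M, C N kn ≤ C N 1 :=
  stmt_9_general M k hk β R hβ hR C hC
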